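/- For 0 < σ < 1, z ∈ ℂ with Re(z²) > 0 (i.e. |arg z| < π/4), and n ∈ ℕ, the kernel b^{σ,z}(t) = z^{2σ}/(4^σ Γ(σ)) e^{-z²/(4t)} t^{-1-σ} satisfies ∫₀^∞ |(d^n/dt^n) b^{σ,z}(t)| t^n dt ≤ C_{n,σ} (|z|²/Re(z²))^{n+σ}, with a constant C_{n,σ} independent of z. -/

import Mathlib

/-!
On `t > 0` the kernel is `A · e^{-w/t} t^{-1-σ}` with `w = z²/4`. Differentiating
`e^{-w/t} t^e P(w/t)` gives `e^{-w/t} t^{e-1} Q(w/t)` with `Q = (X + e) P - X P'`, so the `n`-th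
derivative is `A · e^{-w/t} t^{-1-σ-n} P_n(w/t)` for a real polynomial `P_n` of degree `≤ n` that
does not depend on `z`. Bounding `|e^{-w/t}| = e^{-Re w/t}` and `P_n` coefficientwise, the monomial
of degree `j` contributes `|w|^j ∫₀^∞ e^{-Re w/t} t^{-1-σ-j} dt = |w|^j Γ(σ+j) (Re w)^{-σ-j}`
(substitute `t ↦ 1/t`), and `|w|^{σ+j} (Re w)^{-σ-j} ≤ (|w|/Re w)^{n+σ}` because `Re w ≤ |w|`;
the factor `|w|^σ` is absorbed by `|A| = |w|^σ / Γ(σ)`.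
-/

open Real MeasureTheory Set

noncomputable def extKernelC (σ : ℝ) (z : ℂ) (t : ℝ) : ℂ :=
  z ^ (2 * σ : ℂ) / ((4 : ℂ) ^ (σ : ℂ) * (Real.Gamma σ : ℂ)) *
    Complex.exp (-z ^ 2 / (4 * t)) / (t : ℂ) ^ ((1 + σ : ℝ) : ℂ)

open Polynomial

noncomputable def expRpowPoly (w : ℂ) (e : ℝ) (P : ℝ[X]) (t : ℝ) : ℂ :=
  Complex.exp (-w / t) * ((t ^ e : ℝ) : ℂ) * aeval (w / t) P

lemma hasDerivAt_expRpowPoly (w : ℂ) (e : ℝ) (P : ℝ[X]) {t : ℝ} (ht : 0 < t) :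
    HasDerivAt (expRpowPoly w e P)
      (expRpowPoly w (e - 1) ((X + C e) * P - X * derivative P) t) t := by
  have htC : (t : ℂ) ≠ 0 := by exact_mod_cast ht.ne'
  have hinv : HasDerivAt (fun s : ℝ => w / (s : ℂ)) (-w / (t : ℂ) ^ 2) t := by
    simpa [div_eq_mul_inv] using ((hasDerivAt_inv htC).comp_ofReal).const_mul w
  have hexp : HasDerivAt (fun s : ℝ => Complex.exp (-w / s))
      (Complex.exp (-w / t) * (w / t ^ 2)) t := by
    simpa [neg_div, div_neg] using hinv.neg.cexp
  have hpow : HasDerivAt (fun s : ℝ => ((s ^ e : ℝ) : ℂ)) ((e * t ^ (e - 1) : ℝ) : ℂ) t :=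
    (Real.hasDerivAt_rpow_const (Or.inl ht.ne')).ofReal_comp
  have hpoly := (P.hasDerivAt_aeval (w / t)).comp t hinv
  refine ((hexp.mul hpow).mul hpoly).congr_deriv ?_
  have hte : ((t ^ e : ℝ) : ℂ) = ((t ^ (e - 1) : ℝ) : ℂ) * t := by
    rw [← Complex.ofReal_mul, ← Real.rpow_add_one ht.ne', sub_add_cancel]
  simp only [expRpowPoly, Function.comp_apply, Pi.mul_apply, Complex.coe_algebraMap, map_sub,
    map_mul, map_add, aeval_X, aeval_C, hte]
  field_simp
  push_cast
  ring

noncomputable def kernelPoly (e : ℝ) : ℕ → ℝ[X]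
  | 0 => 1
  | n + 1 => (X + C (e - n)) * kernelPoly e n - X * derivative (kernelPoly e n)

lemma natDegree_kernelPoly_le (e : ℝ) (n : ℕ) : (kernelPoly e n).natDegree ≤ n := by
  induction n with
  | zero => simp [kernelPoly]
  | succ n ih =>
    refine (natDegree_sub_le _ _).trans (max_le ?_ ?_)
    · refine natDegree_mul_le.trans ?_
      have := natDegree_X_add_C (e - n)
      omega
    · refine natDegree_mul_le.trans ?_
      have := natDegree_derivative_le (kernelPoly e n)
      have : (X : ℝ[X]).natDegree ≤ 1 := natDegree_X_le
      omega

lemma iteratedDeriv_eq_expRpowPoly {f : ℝ → ℂ} {A w : ℂ} {e : ℝ}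
    (hf : EqOn f (fun t => A * expRpowPoly w e 1 t) (Ioi 0)) (n : ℕ) {t : ℝ} (ht : 0 < t) :
    iteratedDeriv n f t = A * expRpowPoly w (e - n) (kernelPoly e n) t := by
  induction n generalizing t with
  | zero => simpa [kernelPoly] using hf ht
  | succ n ih =>
    have hev : iteratedDeriv n f =ᶠ[nhds t]
        fun s => A * expRpowPoly w (e - n) (kernelPoly e n) s :=
      Filter.eventually_of_mem (Ioi_mem_nhds ht) fun s hs => ih hs
    rw [iteratedDeriv_succ, hev.deriv_eq, ((hasDerivAt_expRpowPoly w _ _ ht).const_mul A).deriv]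
    push_cast
    rw [sub_sub, kernelPoly]

lemma norm_aeval_le_sum_coeff {P : ℝ[X]} {n : ℕ} (hP : P.natDegree ≤ n) (u : ℂ) :
    ‖aeval u P‖ ≤ ∑ j ∈ Finset.range (n + 1), |P.coeff j| * ‖u‖ ^ j := by
  rw [aeval_eq_sum_range' (Nat.lt_succ_of_le hP)]
  refine (norm_sum_le _ _).trans_eq (Finset.sum_congr rfl fun j _ => ?_)
  rw [norm_smul, norm_pow, Real.norm_eq_abs]

lemma norm_expRpowPoly_mul_pow_le (w : ℂ) (e : ℝ) {P : ℝ[X]} {n : ℕ}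
    (hP : P.natDegree ≤ n) {t : ℝ} (ht : 0 < t) :
    ‖expRpowPoly w (e - n) P t‖ * t ^ n ≤
      ∑ j ∈ Finset.range (n + 1),
        |P.coeff j| * ‖w‖ ^ j * (Real.exp (-(w.re / t)) * t ^ (e - j)) := by
  have hre : (-w / (t : ℂ)).re = -(w.re / t) := by
    rw [neg_div, Complex.neg_re, Complex.div_ofReal_re]
  have hpow : ∀ j : ℕ, t ^ (e - n) * t ^ n * (‖w‖ / t) ^ j = ‖w‖ ^ j * t ^ (e - j) := by
    intro j
    rw [← Real.rpow_natCast t n, ← Real.rpow_add ht, sub_add_cancel, Real.rpow_sub ht,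
      Real.rpow_natCast, div_pow]
    field_simp
  calc ‖expRpowPoly w (e - n) P t‖ * t ^ n
      = Real.exp (-(w.re / t)) * (t ^ (e - n) * t ^ n) * ‖aeval (w / t) P‖ := by
        rw [expRpowPoly, norm_mul, norm_mul, Complex.norm_exp, hre, Complex.norm_real,
          Real.norm_of_nonneg (Real.rpow_nonneg ht.le _)]
        ring
    _ ≤ Real.exp (-(w.re / t)) * (t ^ (e - n) * t ^ n) *
          ∑ j ∈ Finset.range (n + 1), |P.coeff j| * (‖w‖ / t) ^ j := by
        gcongr
        refine (norm_aeval_le_sum_coeff hP _).trans_eq ?_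
        rw [norm_div, Complex.norm_real, Real.norm_of_nonneg ht.le]
    _ = _ := by
        rw [Finset.mul_sum]
        refine Finset.sum_congr rfl fun j _ => ?_
        linear_combination (Real.exp (-(w.re / t)) * |P.coeff j|) * hpow j

lemma exp_neg_div_mul_rpow_eq_comp_inv {p r x : ℝ} (hx : 0 < x) :
    (|(-1 : ℝ)| * x ^ ((-1 : ℝ) - 1)) •
        ((x ^ (-1 : ℝ)) ^ (p - 1) * Real.exp (-(r * x ^ (-1 : ℝ)))) =
      Real.exp (-(r / x)) * x ^ (-1 - p) := by
  rw [smul_eq_mul, abs_neg, abs_one, one_mul, Real.rpow_neg_one, Real.inv_rpow hx.le,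
    ← Real.rpow_neg hx.le, ← div_eq_mul_inv, ← mul_assoc, ← Real.rpow_add hx, mul_comm]
  ring_nf

lemma integral_exp_neg_div_mul_rpow {p r : ℝ} (hp : 0 < p) (hr : 0 < r) :
    ∫ t in Ioi (0 : ℝ), Real.exp (-(r / t)) * t ^ (-1 - p) = (1 / r) ^ p * Real.Gamma p :=
  calc ∫ t in Ioi (0 : ℝ), Real.exp (-(r / t)) * t ^ (-1 - p)
      = ∫ t in Ioi (0 : ℝ), (|(-1 : ℝ)| * t ^ ((-1 : ℝ) - 1)) •
          ((t ^ (-1 : ℝ)) ^ (p - 1) * Real.exp (-(r * t ^ (-1 : ℝ)))) :=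
        setIntegral_congr_fun measurableSet_Ioi fun t ht =>
          (exp_neg_div_mul_rpow_eq_comp_inv ht).symm
    _ = ∫ t in Ioi (0 : ℝ), t ^ (p - 1) * Real.exp (-(r * t)) :=
        integral_comp_rpow_Ioi (fun y => y ^ (p - 1) * Real.exp (-(r * y))) (by norm_num)
    _ = (1 / r) ^ p * Real.Gamma p := integral_rpow_mul_exp_neg_mul_Ioi hp hr

lemma integrableOn_exp_neg_div_mul_rpow {p r : ℝ} (hp : 0 < p) (hr : 0 < r) :
    IntegrableOn (fun t : ℝ => Real.exp (-(r / t)) * t ^ (-1 - p)) (Ioi 0) :=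
  .of_integral_ne_zero (by rw [integral_exp_neg_div_mul_rpow hp hr]; positivity)

lemma setIntegral_norm_expRpowPoly_mul_pow_le {w : ℂ} (hw : 0 < w.re) {p : ℝ} (hp : 0 < p)
    {P : ℝ[X]} {n : ℕ} (hP : P.natDegree ≤ n) :
    ∫ t in Ioi (0 : ℝ), ‖expRpowPoly w (-(1 + p) - n) P t‖ * t ^ n ≤
      ‖w‖ ^ (-p) * (∑ j ∈ Finset.range (n + 1), |P.coeff j| * Real.Gamma (p + j)) *
        (‖w‖ / w.re) ^ ((n : ℝ) + p) := by
  have hW : 0 < ‖w‖ := hw.trans_le (Complex.re_le_norm w)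
  have hq : 1 ≤ ‖w‖ / w.re := (one_le_div hw).mpr (Complex.re_le_norm w)
  have hpj : ∀ j : ℕ, 0 < p + j := fun j => by positivity
  have hscale : ∀ j : ℕ,
      ‖w‖ ^ j * (1 / w.re) ^ (p + j) = ‖w‖ ^ (-p) * (‖w‖ / w.re) ^ (p + j) := by
    intro j
    rw [div_eq_mul_one_div ‖w‖, Real.mul_rpow hW.le (by positivity), ← mul_assoc,
      ← Real.rpow_add hW, neg_add_cancel_left, Real.rpow_natCast]
  calc ∫ t in Ioi (0 : ℝ), ‖expRpowPoly w (-(1 + p) - n) P t‖ * t ^ n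
      ≤ ∫ t in Ioi (0 : ℝ), ∑ j ∈ Finset.range (n + 1),
          |P.coeff j| * ‖w‖ ^ j * (Real.exp (-(w.re / t)) * t ^ (-1 - (p + j))) := by
        refine setIntegral_mono_of_nonneg
          (fun t ht => mul_nonneg (norm_nonneg _) (pow_nonneg (le_of_lt ht) _)) (fun t ht => ?_)
          (integrable_finsetSum _ fun j _ =>
            (integrableOn_exp_neg_div_mul_rpow (hpj j) hw).const_mul _)
        refine (norm_expRpowPoly_mul_pow_le w _ hP ht).trans_eq
          (Finset.sum_congr rfl fun j _ => ?_)
        rw [show -(1 + p) - (j : ℝ) = -1 - (p + j) by ring]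
    _ = ∑ j ∈ Finset.range (n + 1),
          |P.coeff j| * ‖w‖ ^ j * ((1 / w.re) ^ (p + j) * Real.Gamma (p + j)) := by
        rw [integral_finsetSum _ fun j _ =>
          (integrableOn_exp_neg_div_mul_rpow (hpj j) hw).const_mul _]
        refine Finset.sum_congr rfl fun j _ => ?_
        rw [integral_const_mul, integral_exp_neg_div_mul_rpow (hpj j) hw]
    _ = ∑ j ∈ Finset.range (n + 1),
          ‖w‖ ^ (-p) * (|P.coeff j| * Real.Gamma (p + j)) * (‖w‖ / w.re) ^ (p + j) := by
        refine Finset.sum_congr rfl fun j _ => ?_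
        linear_combination (|P.coeff j| * Real.Gamma (p + j)) * hscale j
    _ ≤ ∑ j ∈ Finset.range (n + 1),
          ‖w‖ ^ (-p) * (|P.coeff j| * Real.Gamma (p + j)) *
            (‖w‖ / w.re) ^ ((n : ℝ) + p) := by
        refine Finset.sum_le_sum fun j hj => mul_le_mul_of_nonneg_left
          (Real.rpow_le_rpow_of_exponent_le hq ?_) (by positivity)
        have : (j : ℝ) ≤ n := by exact_mod_cast Finset.mem_range_succ_iff.mp hj
        linarith
    _ = _ := by rw [← Finset.sum_mul, ← Finset.mul_sum]

noncomputable def kernelConst (σ : ℝ) (z : ℂ) : ℂ :=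
  z ^ (2 * σ : ℂ) / ((4 : ℂ) ^ (σ : ℂ) * (Real.Gamma σ : ℂ))

lemma extKernelC_eq_kernelConst_mul (σ : ℝ) (z : ℂ) {t : ℝ} (ht : 0 < t) :
    extKernelC σ z t = kernelConst σ z * expRpowPoly (z ^ 2 / 4) (-(1 + σ)) 1 t := by
  rw [extKernelC, kernelConst, expRpowPoly, map_one, mul_one, Real.rpow_neg ht.le,
    Complex.ofReal_inv, Complex.ofReal_cpow ht.le, mul_div_assoc, div_eq_mul_inv (Complex.exp _),
    neg_div, neg_div, div_div]

lemma norm_kernelConst (σ : ℝ) (z : ℂ) :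
    ‖kernelConst σ z‖ = ‖z ^ 2 / 4‖ ^ σ / |Real.Gamma σ| := by
  have h2σ : (2 * σ : ℂ) = ((2 * σ : ℝ) : ℂ) := by push_cast; ring
  rw [kernelConst, norm_div, norm_mul, h2σ, Complex.norm_cpow_real, Complex.norm_cpow_real,
    Complex.norm_real, Real.norm_eq_abs, norm_div, norm_pow, Real.rpow_mul (norm_nonneg z),
    Real.div_rpow (by positivity) (by norm_num), Real.rpow_two]
  norm_num [div_div]

theorem kernel_iterated_deriv_norm_estimate_general (σ : ℝ) (hσ0 : 0 < σ) (n : ℕ) :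
    ∃ C : ℝ, ∀ z : ℂ, 0 < (z ^ 2).re →
      ∫ t in Ioi (0:ℝ), ‖iteratedDeriv n (fun s : ℝ => extKernelC σ z s) t‖ * t ^ n ≤
        C * (‖z‖ ^ 2 / (z ^ 2).re) ^ ((n : ℝ) + σ) := by
  set P := kernelPoly (-(1 + σ)) n
  refine ⟨(∑ j ∈ Finset.range (n + 1), |P.coeff j| * Real.Gamma (σ + j)) / Real.Gamma σ,
    fun z hz => ?_⟩
  set w := z ^ 2 / 4
  have hre : (z ^ 2).re = 4 * w.re := by simp [w]; ring
  have hwre : 0 < w.re := by linarith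
  have hnorm : ‖z‖ ^ 2 = 4 * ‖w‖ := by simp [w]; ring
  have hΓ := Real.Gamma_pos_of_pos hσ0
  calc ∫ t in Ioi (0:ℝ), ‖iteratedDeriv n (fun s : ℝ => extKernelC σ z s) t‖ * t ^ n
      = ∫ t in Ioi (0:ℝ),
          ‖kernelConst σ z‖ * (‖expRpowPoly w (-(1 + σ) - n) P t‖ * t ^ n) := by
        refine setIntegral_congr_fun measurableSet_Ioi fun t ht => ?_
        rw [iteratedDeriv_eq_expRpowPoly (fun s hs => extKernelC_eq_kernelConst_mul σ z hs) n ht,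
          norm_mul, mul_assoc]
    _ ≤ ‖kernelConst σ z‖ * (‖w‖ ^ (-σ) *
          (∑ j ∈ Finset.range (n + 1), |P.coeff j| * Real.Gamma (σ + j)) *
          (‖w‖ / w.re) ^ ((n : ℝ) + σ)) := by
        rw [integral_const_mul]
        gcongr
        exact setIntegral_norm_expRpowPoly_mul_pow_le hwre hσ0 (natDegree_kernelPoly_le _ n)
    _ = _ := by
        have hW : 0 < ‖w‖ := hwre.trans_le (Complex.re_le_norm w)
        rw [norm_kernelConst, show z ^ 2 / 4 = w from rfl, abs_of_pos hΓ, hre, hnorm,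
          mul_div_mul_left _ _ four_ne_zero, Real.rpow_neg hW.le]
        field_simp

theorem kernel_iterated_deriv_norm_estimate (σ : ℝ) (hσ0 : 0 < σ) (hσ1 : σ < 1) (n : ℕ) :
    ∃ C : ℝ, ∀ z : ℂ, 0 < (z ^ 2).re →
      ∫ t in Ioi (0:ℝ), ‖iteratedDeriv n (fun s : ℝ => extKernelC σ z s) t‖ * t ^ n ≤
        C * (‖z‖ ^ 2 / (z ^ 2).re) ^ ((n : ℝ) + σ) :=
  kernel_iterated_deriv_norm_estimate_general σ hσ0 n
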